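/- Let (E,w) be a singly connected weighted Bratteli diagram and let θ ∈ ℝ∖ℚ. For v ∈ E^0 let G_v := (1/w(v))ℤ + θℤ ⊆ ℝ, and for n ≥ 1 define A_n : ⊕_{v ∈ E_n^0} G_v → ⊕_{u ∈ E_{n+1}^0} G_u on generators by A_n(g δ_v) = Σ_{e ∈ vE^1} g δ_{s(e)} (well-defined since w(v) divides w(s(e))). Let G be the direct limit of the sequence (⊕_{v ∈ E_n^0} G_v, A_n), and let G⁺ ⊆ G be the union over n of the images in G of the cones {x ∈ ⊕_{v ∈ E_n^0} G_v : x_v ≥ 0 for all v ∈ E_n^0}. Then (G, G⁺) is a partially ordered abelian group (in particular G⁺ ∩ (−G⁺) = {0} and G⁺ + G⁺ ⊆ G⁺) which is unperforated (for a ∈ G and an integer m ≥ 1, m·a ∈ G⁺ implies a ∈ G⁺) and has the Riesz interpolation property: for all finite families (a_i)_{i∈I} and (b_j)_{j∈J} in G with a_i ≤ b_j for all i ∈ I, j ∈ J (where x ≤ y means y − x ∈ G⁺), there exists c ∈ G with a_i ≤ c ≤ b_j for all i, j. -/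

import Mathlib

open scoped BigOperators NNReal ENNReal

/-- A `k`-graph: a countable small category presented on its set of morphisms,
with a range map, a source map, a (total, junk-valued on non-composable pairs)
composition, and a degree functor into `ℕ^k` satisfying the factorisation
property. -/
structure KGraph (k : ℕ) where
  M : Type
  countableM : Countable M
  nonemptyM : Nonempty M
  src : M → M
  rng : M → M
  comp : M → M → M
  deg : M → Fin k → ℕ
  src_src : ∀ x, src (src x) = src x
  rng_src : ∀ x, rng (src x) = src x
  src_rng : ∀ x, src (rng x) = rng x
  rng_rng : ∀ x, rng (rng x) = rng x
  comp_id : ∀ x, comp x (src x) = x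
  id_comp : ∀ x, comp (rng x) x = x
  src_comp : ∀ x y, src x = rng y → src (comp x y) = src y
  rng_comp : ∀ x y, src x = rng y → rng (comp x y) = rng x
  comp_assoc : ∀ x y z, src x = rng y → src y = rng z →
    comp (comp x y) z = comp x (comp y z)
  deg_src : ∀ x, deg (src x) = 0
  deg_rng : ∀ x, deg (rng x) = 0
  deg_comp : ∀ x y, src x = rng y → deg (comp x y) = deg x + deg y
  factor : ∀ (x : M) (m n : Fin k → ℕ), deg x = m + n →
    ∃! p : M × M, src p.1 = rng p.2 ∧ comp p.1 p.2 = x ∧ deg p.1 = m ∧ deg p.2 = n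

namespace KGraph

variable {k : ℕ} (Λ : KGraph k)

/-- The vertices (identity morphisms) of a `k`-graph. -/
def IsVertex (v : Λ.M) : Prop := Λ.rng v = v

/-- `Composable x y` means the composition `x ∘ y` (i.e. the path `xy`) is defined. -/
def Composable (x y : Λ.M) : Prop := Λ.src x = Λ.rng y

/-- The type of vertices of `Λ`. -/
def Vtx := {v : Λ.M // Λ.IsVertex v}

theorem isVertex_src (x : Λ.M) : Λ.IsVertex (Λ.src x) := Λ.rng_src x

theorem isVertex_rng (x : Λ.M) : Λ.IsVertex (Λ.rng x) := Λ.rng_rng x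

/-- The source of a morphism, as a vertex. -/
def srcV (x : Λ.M) : Λ.Vtx := ⟨Λ.src x, Λ.isVertex_src x⟩

/-- The set `vΛ^{≤ n}`. -/
def leSet (v : Λ.M) (n : Fin k → ℕ) : Set Λ.M :=
  {x | Λ.rng x = v ∧ Λ.deg x ≤ n ∧
    ∀ i : Fin k, Λ.deg x + Pi.single i 1 ≤ n →
      ¬∃ y, Λ.rng y = Λ.src x ∧ Λ.deg y = Pi.single i 1}

/-- A `k`-graph is row-finite if `vΛ^n` is finite for every vertex `v` and `n ∈ ℕ^k`. -/
def RowFinite : Prop :=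
  ∀ (v : Λ.M) (n : Fin k → ℕ), Λ.IsVertex v → {x | Λ.rng x = v ∧ Λ.deg x = n}.Finite

/-- A `k`-graph is locally convex if whenever `i < j`, `e ∈ Λ^{e_i}`, `f ∈ Λ^{e_j}` and
`r e = r f`, both `e` and `f` extend to paths of degree `e_i + e_j`. -/
def LocallyConvex : Prop :=
  ∀ (i j : Fin k), i < j → ∀ e f : Λ.M,
    Λ.deg e = Pi.single i 1 → Λ.deg f = Pi.single j 1 → Λ.rng e = Λ.rng f →
    (∃ e', Λ.Composable e e' ∧ Λ.deg e' = Pi.single j 1) ∧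
    (∃ f', Λ.Composable f f' ∧ Λ.deg f' = Pi.single i 1)

/-- `Λ^{min}(x,y)`: the pairs `(α, β)` with `xα = yβ` of degree `d x ⊔ d y`. -/
def MinExt (x y : Λ.M) : Set (Λ.M × Λ.M) :=
  {p | Λ.Composable x p.1 ∧ Λ.Composable y p.2 ∧
    Λ.comp x p.1 = Λ.comp y p.2 ∧ Λ.deg (Λ.comp x p.1) = Λ.deg x ⊔ Λ.deg y}

/-- A subset `E ⊆ vΛ` is exhaustive if every `x ∈ vΛ` has a minimal common extension
with some element of `E`. -/
def Exhaustive (v : Λ.M) (E : Set Λ.M) : Prop :=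
  ∀ x, Λ.rng x = v → ∃ μ ∈ E, (Λ.MinExt x μ).Nonempty

/-- A graph trace on `Λ`. -/
def IsGraphTrace (g : Λ.Vtx → ℝ≥0) : Prop :=
  ∀ (v : Λ.Vtx) (n : Fin k → ℕ), g v = ∑ᶠ x ∈ Λ.leSet v.1 n, g (Λ.srcV x)

/-- A `𝕋`-valued `2`-cocycle on `Λ`, presented as a `ℂ`-valued function that is
unimodular on composable pairs. -/
def IsTCocycle (c : Λ.M → Λ.M → ℂ) : Prop :=
  (∀ x y, Λ.Composable x y → ‖c x y‖ = 1) ∧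
  (∀ x y, Λ.IsVertex x ∨ Λ.IsVertex y → c x y = 1) ∧
  (∀ x y z, Λ.Composable x y → Λ.Composable y z →
    c x y * c (Λ.comp x y) z = c y z * c x (Λ.comp y z))

/-- A Cuntz–Krieger `(Λ, c)`-family in a `C*`-algebra `B`: relations (CK1)–(CK4). -/
def IsCKFamily {B : Type*} [NonUnitalCStarAlgebra B] [NormedSpace ℂ B]
    (c : Λ.M → Λ.M → ℂ) (s : Λ.M → B) : Prop :=
  (∀ v, Λ.IsVertex v → star (s v) = s v ∧ s v * s v = s v) ∧
  (∀ v w, Λ.IsVertex v → Λ.IsVertex w → v ≠ w → s v * s w = 0) ∧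
  (∀ x y, Λ.Composable x y → s x * s y = c x y • s (Λ.comp x y)) ∧
  (∀ x, star (s x) * s x = s (Λ.src x)) ∧
  (∀ (v : Λ.M) (n : Fin k → ℕ), Λ.IsVertex v →
    s v = ∑ᶠ x ∈ Λ.leSet v n, s x * star (s x))

end KGraph
/-- A Bratteli diagram: a directed graph whose vertices are partitioned into finite
nonempty levels (level `n` here corresponds to `E_{n+1}^0` in the paper), each edge
pointing from a vertex at level `n+1` (its source) to one at level `n` (its range),
such that every vertex receives an edge and every vertex not at level `0` emits one. -/
structure BratteliDiagram where
  V : Type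
  Edge : Type
  esrc : Edge → V
  erng : Edge → V
  level : V → ℕ
  level_src : ∀ e, level (esrc e) = level (erng e) + 1
  level_finite : ∀ n, {v | level v = n}.Finite
  level_nonempty : ∀ n, ∃ v, level v = n
  rcv : ∀ v, ∃ e, erng e = v
  emit : ∀ v, level v ≠ 0 → ∃ e, esrc e = v

namespace BratteliDiagram

/-- A Bratteli diagram is singly connected if there is at most one edge between any
two vertices. -/
def SinglyConnected (E : BratteliDiagram) : Prop :=
  ∀ e f : E.Edge, E.erng e = E.erng f → E.esrc e = E.esrc f → e = f

/-- A graph trace on a Bratteli diagram. -/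
def IsTrace (E : BratteliDiagram) (h : E.V → ℝ≥0) : Prop :=
  ∀ v, h v = ∑ᶠ e ∈ {e | E.erng e = v}, h (E.esrc e)

/-- `HasPath E n v u`: there is a path of length `n` in `E` with range `v` and
source `u`. -/
def HasPath (E : BratteliDiagram) : ℕ → E.V → E.V → Prop
  | 0, v, u => v = u
  | n + 1, v, u => ∃ e, E.erng e = v ∧ HasPath E n (E.esrc e) u

/-- A Bratteli diagram is cofinal if for all `v, v'` there exists `n` such that the
source of every path of length `n` with range `v'` is connected to `v`. -/
def Cofinal (E : BratteliDiagram) : Prop :=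
  ∀ v v' : E.V, ∃ n : ℕ, ∀ u : E.V, E.HasPath n v' u → ∃ m : ℕ, E.HasPath m v u

end BratteliDiagram

open KGraph

/-- The `(k+1)`-graph `Λ_E` associated to a Bratteli diagram `E` of covering maps
`p_f : Λ_{s(f)} → Λ_{r(f)}` between `k`-graphs `(Λ_v)_{v ∈ E^0}`, together with its
defining data: injective functors `ι_v : Λ_v → Λ_E` and a bijection
`e : ⨆_{v ∉ E_1^0} Λ_v^0 × E^1 v → Λ_E^{e_{k+1}}` satisfying properties (1)–(5). -/
structure BCSLimit {k : ℕ} (E : BratteliDiagram) (Λv : E.V → KGraph k)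
    (pe : ∀ f : E.Edge, (Λv (E.esrc f)).M → (Λv (E.erng f)).M) where
  Lam : KGraph (k + 1)
  ι : ∀ v, (Λv v).M → Lam.M
  ι_inj : ∀ v, Function.Injective (ι v)
  ι_src : ∀ v x, Lam.src (ι v x) = ι v ((Λv v).src x)
  ι_rng : ∀ v x, Lam.rng (ι v x) = ι v ((Λv v).rng x)
  ι_comp : ∀ v x y, (Λv v).Composable x y →
    Lam.comp (ι v x) (ι v y) = ι v ((Λv v).comp x y)
  ι_deg : ∀ v x, Lam.deg (ι v x) = Fin.snoc ((Λv v).deg x) 0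
  ι_disjoint : ∀ v u x y, ι v x = ι u y → v = u
  ι_union : ∀ z : Lam.M, Lam.deg z (Fin.last k) = 0 → ∃ v x, ι v x = z
  edge : (Σ f : E.Edge, (Λv (E.esrc f)).M) → Lam.M
  edge_deg : ∀ q : Σ f : E.Edge, (Λv (E.esrc f)).M, (Λv (E.esrc q.1)).IsVertex q.2 →
    Lam.deg (edge q) = Fin.snoc (fun _ : Fin k => 0) 1
  edge_injOn : Set.InjOn edge {q | (Λv (E.esrc q.1)).IsVertex q.2}
  edge_surj : ∀ z : Lam.M, Lam.deg z = Fin.snoc (fun _ : Fin k => 0) 1 →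
    ∃ q, (Λv (E.esrc q.1)).IsVertex q.2 ∧ edge q = z
  edge_src : ∀ (f : E.Edge) (x : (Λv (E.esrc f)).M), (Λv (E.esrc f)).IsVertex x →
    Lam.src (edge ⟨f, x⟩) = ι (E.esrc f) x
  edge_rng : ∀ (f : E.Edge) (x : (Λv (E.esrc f)).M), (Λv (E.esrc f)).IsVertex x →
    Lam.rng (edge ⟨f, x⟩) = ι (E.erng f) (pe f x)
  edge_comm : ∀ (f : E.Edge) (x : (Λv (E.esrc f)).M),
    Lam.comp (edge ⟨f, (Λv (E.esrc f)).rng x⟩) (ι (E.esrc f) x) =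
      Lam.comp (ι (E.erng f) (pe f x)) (edge ⟨f, (Λv (E.esrc f)).src x⟩)
open scoped DirectSum

attribute [local instance] Classical.propDecidable

/-- The transition homomorphisms `G i →+ G j` (for `i ≤ j`) generated by a sequence of
homomorphisms `G n →+ G (n+1)`. -/
noncomputable def natTransMaps {G : ℕ → Type*} [∀ n, AddCommGroup (G n)]
    (f : ∀ n, G n →+ G (n + 1)) : ∀ i j : ℕ, i ≤ j → (G i →+ G j) :=
  fun i _ h => Nat.leRecOn h (fun {m} g => (f m).comp g) (AddMonoidHom.id (G i))

/-- For `u` a vertex at level `n+1` of a Bratteli diagram and `e` an edge emitted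
by `u`, the range of `e` as a vertex at level `n`. -/
def BratteliDiagram.rngV (E : BratteliDiagram) {n : ℕ}
    (u : {v : E.V // E.level v = n + 1}) (e : {e : E.Edge // E.esrc e = u.1}) :
    {v : E.V // E.level v = n} :=
  ⟨E.erng e.1, by
    have h := E.level_src e.1
    rw [e.2, u.2] at h
    omega⟩
open BratteliDiagram in

/-!
Each level `⊕_{v ∈ E_n^0} G_v` is a finite direct sum of subgroups of `ℝ` ordered
coordinatewise, hence a lattice-ordered group in which `m • x ≥ 0` forces `x ≥ 0`, and the
maps `A_n` are positive. An element of the limit lies in `G⁺` iff it becomes positive at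
some level, and finitely many elements and inequalities are all realised at one common
level, so each property of the levels passes to the limit.
-/

def IsUnperforated (α : Type*) [AddMonoid α] [Preorder α] : Prop :=
  ∀ (m : ℕ) (a : α), 0 < m → 0 ≤ m • a → 0 ≤ a

def HasRieszInterpolation (α : Type*) [Preorder α] : Prop :=
  ∀ (r l : ℕ) (a : Fin r → α) (b : Fin l → α), (∀ i j, a i ≤ b j) →
    ∃ c, (∀ i, a i ≤ c) ∧ ∀ j, c ≤ b j

theorem Lattice.hasRieszInterpolation (α : Type*) [Lattice α] [Nonempty α] :
    HasRieszInterpolation α := by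
  intro r l a b hab
  obtain ⟨L, hL⟩ := Finite.exists_ge b
  -- adjoining a lower bound of the `b j` keeps the supremum nonempty when `r = 0`
  let lowerOrA : Option (Fin r) → α := fun o => o.elim L a
  refine ⟨Finset.univ.sup' Finset.univ_nonempty lowerOrA,
    fun i => Finset.le_sup' lowerOrA (Finset.mem_univ (some i)),
    fun j => Finset.sup'_le _ _ ?_⟩
  rintro (_ | i) -
  · exact hL j
  · exact hab i j

section DirectSumOrder

variable {ι : Type*} {β : ι → Type*} [∀ i, AddCommGroup (β i)]

instance DirectSum.instLattice [∀ i, Lattice (β i)] : Lattice (⨁ i, β i) :=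
  DFinsupp.lattice

instance DirectSum.instIsOrderedAddMonoid [∀ i, Lattice (β i)]
    [∀ i, IsOrderedAddMonoid (β i)] : IsOrderedAddMonoid (⨁ i, β i) :=
  inferInstanceAs (IsOrderedAddMonoid (Π₀ i, β i))

theorem DirectSum.isUnperforated [∀ i, LinearOrder (β i)] [∀ i, IsOrderedAddMonoid (β i)] :
    IsUnperforated (⨁ i, β i) :=
  fun _ _ hm ha i => (nsmul_nonneg_iff hm.ne').1 (ha i)

end DirectSumOrder

section NatTransMaps

variable {G : ℕ → Type*} [∀ n, AddCommGroup (G n)] (f : ∀ n, G n →+ G (n + 1))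

theorem natTransMaps_self (i : ℕ) (h : i ≤ i) : natTransMaps f i i h = AddMonoidHom.id (G i) :=
  Nat.leRecOn_self (C := fun k => G i →+ G k) (next := fun {m} g => (f m).comp g) _

theorem natTransMaps_succ {i j : ℕ} (hij : i ≤ j) (h : i ≤ j + 1) :
    natTransMaps f i (j + 1) h = (f j).comp (natTransMaps f i j hij) :=
  Nat.leRecOn_succ (C := fun k => G i →+ G k) (next := fun {m} g => (f m).comp g) hij _

theorem natTransMaps_trans {i j k : ℕ} (hij : i ≤ j) (hjk : j ≤ k) (x : G i) :
    natTransMaps f j k hjk (natTransMaps f i j hij x) =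
      natTransMaps f i k (hij.trans hjk) x := by
  induction k, hjk using Nat.le_induction with
  | base => rw [natTransMaps_self]; rfl
  | succ k hjk ih =>
    rw [natTransMaps_succ f hjk, natTransMaps_succ f (hij.trans hjk), AddMonoidHom.comp_apply,
      AddMonoidHom.comp_apply, ih]

instance natTransMaps.directedSystem : DirectedSystem G (fun i j h => natTransMaps f i j h) :=
  ⟨fun i x => by rw [natTransMaps_self]; rfl, fun _ _ _ hij hjk x => natTransMaps_trans f hij hjk x⟩

theorem natTransMaps_monotone [∀ n, PartialOrder (G n)] (hf : ∀ n, Monotone (f n)) {i j : ℕ}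
    (h : i ≤ j) : Monotone (natTransMaps f i j h) := by
  induction j, h using Nat.le_induction with
  | base => rw [natTransMaps_self]; exact monotone_id
  | succ j hij ih => rw [natTransMaps_succ f hij]; exact (hf j).comp ih

theorem exists_of_eq_family {ι : Type*} [Finite ι]
    (z : ι → AddCommGroup.DirectLimit G (natTransMaps f)) :
    ∃ n, ∃ x : ι → G n, ∀ i, AddCommGroup.DirectLimit.of G (natTransMaps f) n (x i) = z i := by
  choose n y hy using fun i => AddCommGroup.DirectLimit.induction_on (C := fun z =>
    ∃ n y, AddCommGroup.DirectLimit.of G (natTransMaps f) n y = z) (z i) fun n y => ⟨n, y, rfl⟩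
  obtain ⟨N, hN⟩ := Finite.exists_le n
  exact ⟨N, fun i => natTransMaps f (n i) N (hN i) (y i),
    fun i => by rw [AddCommGroup.DirectLimit.of_f, hy]⟩

end NatTransMaps

section LimitPosCone

variable {G : ℕ → Type*} [∀ n, AddCommGroup (G n)] [∀ n, PartialOrder (G n)]
  {f : ∀ n, G n →+ G (n + 1)}

variable (f) in
def limitPosCone : Set (AddCommGroup.DirectLimit G (natTransMaps f)) :=
  ⋃ n, AddCommGroup.DirectLimit.of G (natTransMaps f) n '' {x | 0 ≤ x}

theorem of_mem_limitPosCone {n : ℕ} {x : G n} (hx : 0 ≤ x) :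
    AddCommGroup.DirectLimit.of G (natTransMaps f) n x ∈ limitPosCone f :=
  Set.mem_iUnion.2 ⟨n, x, hx, rfl⟩

theorem zero_mem_limitPosCone : 0 ∈ limitPosCone f := by
  simpa using of_mem_limitPosCone (f := f) (le_refl (0 : G 0))

variable [∀ n, IsOrderedAddMonoid (G n)] (hf : ∀ n, Monotone (f n))
include hf

theorem natTransMaps_nonneg {i j : ℕ} (h : i ≤ j) {x : G i} (hx : 0 ≤ x) :
    0 ≤ natTransMaps f i j h x :=
  (monotone_iff_map_nonneg _).1 (natTransMaps_monotone f hf h) x hx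

theorem natTransMaps_nonneg_of_le {n m k : ℕ} (hnm : n ≤ m) (hmk : m ≤ k) {x : G n}
    (hx : 0 ≤ natTransMaps f n m hnm x) : 0 ≤ natTransMaps f n k (hnm.trans hmk) x := by
  rw [← natTransMaps_trans f hnm hmk]
  exact natTransMaps_nonneg hf hmk hx

theorem of_mem_limitPosCone_iff {n : ℕ} (x : G n) :
    AddCommGroup.DirectLimit.of G (natTransMaps f) n x ∈ limitPosCone f ↔
      ∃ m, ∃ h : n ≤ m, 0 ≤ natTransMaps f n m h x := by
  refine ⟨fun hx => ?_, fun ⟨m, h, hx⟩ =>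
    AddCommGroup.DirectLimit.of_f (G := G) h x ▸ of_mem_limitPosCone hx⟩
  obtain ⟨k, y, hy, hyx⟩ := Set.mem_iUnion.1 hx
  have hdiff : AddCommGroup.DirectLimit.of G (natTransMaps f) (max n k)
      (natTransMaps f n _ (le_max_left n k) x - natTransMaps f k _ (le_max_right n k) y) = 0 := by
    rw [map_sub, AddCommGroup.DirectLimit.of_f, AddCommGroup.DirectLimit.of_f, hyx, sub_self]
  obtain ⟨m, hm, hxy⟩ := AddCommGroup.DirectLimit.of.zero_exact _ _ hdiff
  rw [map_sub, natTransMaps_trans, natTransMaps_trans, sub_eq_zero] at hxy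
  exact ⟨m, _, hxy ▸ natTransMaps_nonneg hf _ hy⟩

theorem forall_of_mem_limitPosCone_iff {ι : Type*} [Finite ι] {n : ℕ} (x : ι → G n) :
    (∀ i, AddCommGroup.DirectLimit.of G (natTransMaps f) n (x i) ∈ limitPosCone f) ↔
      ∃ m, ∃ h : n ≤ m, ∀ i, 0 ≤ natTransMaps f n m h (x i) := by
  refine ⟨fun hx => ?_, fun ⟨m, h, hx⟩ i => (of_mem_limitPosCone_iff hf _).2 ⟨m, h, hx i⟩⟩
  choose m hm hxm using fun i => (of_mem_limitPosCone_iff hf (x i)).1 (hx i)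
  obtain ⟨M, hM⟩ := Finite.exists_le m
  exact ⟨max n M, le_max_left n M,
    fun i => natTransMaps_nonneg_of_le hf (hm i) ((hM i).trans (le_max_right n M)) (hxm i)⟩

theorem limitPosCone_inter_neg : limitPosCone f ∩ {z | -z ∈ limitPosCone f} = {0} := by
  refine Set.eq_singleton_iff_unique_mem.2 ⟨⟨zero_mem_limitPosCone, by simpa using
    zero_mem_limitPosCone⟩, fun z ⟨hz, hnz⟩ => ?_⟩
  induction z using AddCommGroup.DirectLimit.induction_on with | ih n x =>
  rw [Set.mem_ofPred_eq, ← map_neg, of_mem_limitPosCone_iff hf] at hnz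
  obtain ⟨m₁, h₁, hx₁⟩ := (of_mem_limitPosCone_iff hf x).1 hz
  obtain ⟨m₂, h₂, hx₂⟩ := hnz
  have hpos := natTransMaps_nonneg_of_le hf h₁ (le_max_left m₁ m₂) hx₁
  have hneg := natTransMaps_nonneg_of_le hf h₂ (le_max_right m₁ m₂) hx₂
  rw [map_neg, neg_nonneg] at hneg
  rw [← AddCommGroup.DirectLimit.of_f (h₁.trans (le_max_left m₁ m₂)), le_antisymm hneg hpos,
    map_zero]

theorem add_mem_limitPosCone {a b : AddCommGroup.DirectLimit G (natTransMaps f)}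
    (ha : a ∈ limitPosCone f) (hb : b ∈ limitPosCone f) : a + b ∈ limitPosCone f := by
  obtain ⟨n, x, hx, rfl⟩ := Set.mem_iUnion.1 ha
  obtain ⟨k, y, hy, rfl⟩ := Set.mem_iUnion.1 hb
  rw [← AddCommGroup.DirectLimit.of_f (le_max_left n k) x,
    ← AddCommGroup.DirectLimit.of_f (le_max_right n k) y, ← map_add]
  exact of_mem_limitPosCone
    (add_nonneg (natTransMaps_nonneg hf _ hx) (natTransMaps_nonneg hf _ hy))

theorem mem_limitPosCone_of_nsmul_mem (hG : ∀ n, IsUnperforated (G n))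
    {a : AddCommGroup.DirectLimit G (natTransMaps f)} {m : ℕ} (hm : 0 < m)
    (hma : m • a ∈ limitPosCone f) : a ∈ limitPosCone f := by
  induction a using AddCommGroup.DirectLimit.induction_on with | ih n x =>
  rw [← map_nsmul, of_mem_limitPosCone_iff hf] at hma
  obtain ⟨k, h, hx⟩ := hma
  rw [map_nsmul] at hx
  exact (of_mem_limitPosCone_iff hf x).2 ⟨k, h, hG k m _ hm hx⟩

theorem limitPosCone_interpolation (hG : ∀ n, HasRieszInterpolation (G n)) (r l : ℕ)
    (a : Fin r → AddCommGroup.DirectLimit G (natTransMaps f))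
    (b : Fin l → AddCommGroup.DirectLimit G (natTransMaps f))
    (hab : ∀ i j, b j - a i ∈ limitPosCone f) :
    ∃ c, (∀ i, c - a i ∈ limitPosCone f) ∧ ∀ j, b j - c ∈ limitPosCone f := by
  obtain ⟨n, x, hx⟩ := exists_of_eq_family f (Sum.elim a b)
  have hxa : ∀ i, AddCommGroup.DirectLimit.of G (natTransMaps f) n (x (.inl i)) = a i :=
    fun i => hx (.inl i)
  have hxb : ∀ j, AddCommGroup.DirectLimit.of G (natTransMaps f) n (x (.inr j)) = b j :=
    fun j => hx (.inr j)
  have hlevel : ∀ p : Fin r × Fin l, AddCommGroup.DirectLimit.of G (natTransMaps f) n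
      (x (.inr p.2) - x (.inl p.1)) ∈ limitPosCone f := fun p => by
    simpa only [map_sub, hxa, hxb] using hab p.1 p.2
  obtain ⟨m, h, hm⟩ := (forall_of_mem_limitPosCone_iff hf _).1 hlevel
  obtain ⟨c, hac, hcb⟩ := hG m r l (fun i => natTransMaps f n m h (x (.inl i)))
    (fun j => natTransMaps f n m h (x (.inr j))) fun i j => by
      simpa only [map_sub, sub_nonneg] using hm (i, j)
  refine ⟨AddCommGroup.DirectLimit.of G (natTransMaps f) m c, fun i => ?_, fun j => ?_⟩
  · rw [← hxa i, ← AddCommGroup.DirectLimit.of_f h, ← map_sub]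
    exact of_mem_limitPosCone (sub_nonneg.2 (hac i))
  · rw [← hxb j, ← AddCommGroup.DirectLimit.of_f h, ← map_sub]
    exact of_mem_limitPosCone (sub_nonneg.2 (hcb j))

end LimitPosCone

open BratteliDiagram in
theorem rank3_K0_riesz_general (E : BratteliDiagram) (w : E.V → ℕ) (θ : ℝ)
    (A : ∀ n : ℕ,
      (⨁ v : {v : E.V // E.level v = n}, AddSubgroup.closure {((w v.1 : ℝ))⁻¹, θ}) →+
      (⨁ v : {v : E.V // E.level v = n + 1}, AddSubgroup.closure {((w v.1 : ℝ))⁻¹, θ}))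
    (hA : ∀ (n : ℕ)
        (x : ⨁ v : {v : E.V // E.level v = n}, AddSubgroup.closure {((w v.1 : ℝ))⁻¹, θ})
        (u : {v : E.V // E.level v = n + 1}),
      ((A n x) u : ℝ) = ∑ᶠ e : {e : E.Edge // E.esrc e = u.1}, (x (E.rngV u e) : ℝ))
    (Gpos : Set (AddCommGroup.DirectLimit
      (fun n => ⨁ v : {v : E.V // E.level v = n}, AddSubgroup.closure {((w v.1 : ℝ))⁻¹, θ})
      (natTransMaps A)))
    (hGpos : Gpos = ⋃ n : ℕ,
      (AddCommGroup.DirectLimit.of _ (natTransMaps A) n) ''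
        {x | ∀ v, 0 ≤ ((x v : ℝ))}) :
    (Gpos ∩ {x | -x ∈ Gpos} = {0}) ∧
    (∀ a ∈ Gpos, ∀ b ∈ Gpos, a + b ∈ Gpos) ∧
    (∀ a, ∀ m : ℕ, 1 ≤ m → m • a ∈ Gpos → a ∈ Gpos) ∧
    (∀ (r l : ℕ) (a : Fin r → _) (b : Fin l → _),
      (∀ i j, b j - a i ∈ Gpos) →
      ∃ c, (∀ i, c - a i ∈ Gpos) ∧ (∀ j, b j - c ∈ Gpos)) := by
  obtain rfl : Gpos = limitPosCone A := hGpos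
  have hA_mono : ∀ n, Monotone (A n) := fun n =>
    (monotone_iff_map_nonneg _).2 fun x hx u => by
      change (0 : ℝ) ≤ _
      rw [hA]
      exact finsum_nonneg fun _ => hx _
  exact ⟨limitPosCone_inter_neg hA_mono, fun a ha b hb => add_mem_limitPosCone hA_mono ha hb,
    fun a m hm => mem_limitPosCone_of_nsmul_mem hA_mono (fun _ => DirectSum.isUnperforated) hm,
    limitPosCone_interpolation hA_mono fun _ => Lattice.hasRieszInterpolation _⟩

open BratteliDiagram in
/-- For a singly connected weighted Bratteli diagram `(E,w)` and
irrational `θ`, the direct limit `G` of `(⊕_{v ∈ E_n^0} (1/w(v))ℤ + θℤ, A_n)`, with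
positive cone `G⁺` the union of the images of the coordinatewise-nonnegative cones,
is a partially ordered abelian group which is unperforated and has the Riesz
interpolation property. -/
theorem rank3_K0_riesz (E : BratteliDiagram) (hsc : E.SinglyConnected)
    (w : E.V → ℕ) (hw : ∀ v, 0 < w v)
    (hdvd : ∀ f : E.Edge, w (E.erng f) ∣ w (E.esrc f))
    (θ : ℝ) (hθ : Irrational θ)
    (A : ∀ n : ℕ,
      (⨁ v : {v : E.V // E.level v = n}, AddSubgroup.closure {((w v.1 : ℝ))⁻¹, θ}) →+
      (⨁ v : {v : E.V // E.level v = n + 1}, AddSubgroup.closure {((w v.1 : ℝ))⁻¹, θ}))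
    (hA : ∀ (n : ℕ)
        (x : ⨁ v : {v : E.V // E.level v = n}, AddSubgroup.closure {((w v.1 : ℝ))⁻¹, θ})
        (u : {v : E.V // E.level v = n + 1}),
      ((A n x) u : ℝ) = ∑ᶠ e : {e : E.Edge // E.esrc e = u.1}, (x (E.rngV u e) : ℝ))
    (Gpos : Set (AddCommGroup.DirectLimit
      (fun n => ⨁ v : {v : E.V // E.level v = n}, AddSubgroup.closure {((w v.1 : ℝ))⁻¹, θ})
      (natTransMaps A)))
    (hGpos : Gpos = ⋃ n : ℕ,
      (AddCommGroup.DirectLimit.of _ (natTransMaps A) n) ''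
        {x | ∀ v, 0 ≤ ((x v : ℝ))}) :
    (Gpos ∩ {x | -x ∈ Gpos} = {0}) ∧
    (∀ a ∈ Gpos, ∀ b ∈ Gpos, a + b ∈ Gpos) ∧
    (∀ a, ∀ m : ℕ, 1 ≤ m → m • a ∈ Gpos → a ∈ Gpos) ∧
    (∀ (r l : ℕ) (a : Fin r → _) (b : Fin l → _),
      (∀ i j, b j - a i ∈ Gpos) →
      ∃ c, (∀ i, c - a i ∈ Gpos) ∧ (∀ j, b j - c ∈ Gpos)) :=
  rank3_K0_riesz_general E w θ A hA Gpos hGpos
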